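/- If ρ: ℝ → [0,1] is even with ρ(r) → 1 as |r| → ∞, and a sample Xⁿ has all points distinct with n ≥ 2, then for all sufficiently small c > 0, A(Xⁿ; c) = min_t Σᵢ ρ((xᵢ-t)/c) ≥ n - 1 - δ for any δ > 0, hence ε*(T;Xⁿ) = (1 - A/n)/(2 - A/n) → 1/(n+1) as c → 0 when ρ(0) = 0. -/
import Mathlib

open Filter

theorem stmt_19 (n : ℕ) (hn : 2 ≤ n) (x : Fin n → ℝ) (hx : Function.Injective x)
    (ρ : ℝ → ℝ) (heven : ∀ r, ρ (-r) = ρ r)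
    (hrange : ∀ r, ρ r ∈ Set.Icc (0 : ℝ) 1) (h0 : ρ 0 = 0)
    (htop : Tendsto ρ atTop (nhds 1)) (hbot : Tendsto ρ atBot (nhds 1))
    (A : ℝ → ℝ) (hA : ∀ c, A c = ⨅ t : ℝ, ∑ i, ρ ((x i - t) / c)) :
    (∀ δ > (0 : ℝ), ∃ c₀ > (0 : ℝ), ∀ c : ℝ, 0 < c → c < c₀ →
      (n : ℝ) - 1 - δ ≤ A c) ∧
    Tendsto (fun c => (1 - A c / n) / (2 - A c / n))
      (nhdsWithin 0 (Set.Ioi 0)) (nhds (1 / ((n : ℝ) + 1))) := by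
  have hnpos : 0 < n := by omega
  have hnR : (0:ℝ) < n := by exact_mod_cast hnpos
  have hsum_nonneg : ∀ c t : ℝ, 0 ≤ ∑ i, ρ ((x i - t) / c) :=
    fun c t => Finset.sum_nonneg fun i _ => (hrange _).1
  have hbdd : ∀ c : ℝ, BddBelow (Set.range fun t : ℝ => ∑ i, ρ ((x i - t) / c)) := by
    intro c
    refine ⟨0, ?_⟩
    rintro y ⟨t, rfl⟩
    exact hsum_nonneg c t
  -- upper bound: A c ≤ n - 1
  set i0 : Fin n := ⟨0, hnpos⟩ with hi0
  have hub : ∀ c : ℝ, A c ≤ (n:ℝ) - 1 := by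
    intro c
    rw [hA c]
    refine le_trans (ciInf_le (hbdd c) (x i0)) ?_
    have hzero : ρ ((x i0 - x i0) / c) = 0 := by simp [h0]
    have heq : ∑ i, ρ ((x i - x i0) / c)
        = ∑ i ∈ Finset.univ.erase i0, ρ ((x i - x i0) / c) :=
      (Finset.sum_erase (f := fun i => ρ ((x i - x i0) / c)) Finset.univ hzero).symm
    rw [heq]
    have hle : ∑ i ∈ Finset.univ.erase i0, ρ ((x i - x i0) / c)
        ≤ (Finset.univ.erase i0).card • (1:ℝ) :=
      Finset.sum_le_card_nsmul _ _ 1 fun i _ => (hrange _).2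
    have hcard : (Finset.univ.erase i0).card = n - 1 := by
      rw [Finset.card_erase_of_mem (Finset.mem_univ _), Finset.card_univ, Fintype.card_fin]
    rw [hcard] at hle
    refine hle.trans ?_
    rw [nsmul_eq_mul, mul_one]
    have : ((n - 1 : ℕ) : ℝ) = (n:ℝ) - 1 := by
      push_cast [Nat.cast_sub (by omega : 1 ≤ n)]; ring
    rw [this]
  -- minimal gap
  obtain ⟨d, hdpos, hd⟩ : ∃ d > (0:ℝ), ∀ i j, i ≠ j → d ≤ |x i - x j| := by
    set S : Finset ℝ := (Finset.univ.offDiag).image (fun p : Fin n × Fin n => |x p.1 - x p.2|)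
      with hS
    have hSne : S.Nonempty := by
      refine ⟨|x i0 - x ⟨1, by omega⟩|, ?_⟩
      rw [hS]
      refine Finset.mem_image.mpr ⟨(i0, ⟨1, by omega⟩), ?_, rfl⟩
      simp [Finset.mem_offDiag, hi0, Fin.ext_iff]
    refine ⟨S.min' hSne, ?_, ?_⟩
    · obtain ⟨p, hp, hpe⟩ := Finset.mem_image.mp (S.min'_mem hSne)
      rw [← hpe]
      have hne : p.1 ≠ p.2 := (Finset.mem_offDiag.mp hp).2.2
      have : x p.1 ≠ x p.2 := fun h => hne (hx h)
      exact abs_pos.mpr (sub_ne_zero.mpr this)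
    · intro i j hij
      refine Finset.min'_le _ _ ?_
      exact Finset.mem_image.mpr ⟨(i, j), Finset.mem_offDiag.mpr ⟨Finset.mem_univ _,
        Finset.mem_univ _, hij⟩, rfl⟩
  -- key lemma
  have hkey : ∀ δ : ℝ, 0 < δ → δ ≤ 1 → ∃ c₀ > (0:ℝ), ∀ c : ℝ, 0 < c → c < c₀ →
      (n : ℝ) - 1 - δ ≤ A c := by
    intro δ hδpos hδ1
    have hlt : 1 - δ / n < 1 := by
      have : 0 < δ / n := div_pos hδpos hnR
      linarith
    have hev : ∀ᶠ r in atTop, 1 - δ / n < ρ r := htop.eventually (eventually_gt_nhds hlt)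
    obtain ⟨M₀, hM₀⟩ := eventually_atTop.mp hev
    set M : ℝ := max M₀ 1 with hMdef
    have hMpos : (0:ℝ) < M := lt_of_lt_of_le one_pos (le_max_right _ _)
    have hM : ∀ r : ℝ, M ≤ |r| → 1 - δ / n ≤ ρ r := by
      intro r hr
      rcases le_or_gt 0 r with h | h
      · rw [abs_of_nonneg h] at hr
        exact le_of_lt (hM₀ r (le_trans (le_max_left _ _) hr))
      · rw [abs_of_neg h] at hr
        rw [← heven r]
        exact le_of_lt (hM₀ (-r) (le_trans (le_max_left _ _) hr))
    refine ⟨d / (2 * M), div_pos hdpos (by linarith), ?_⟩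
    intro c hc hcc
    rw [hA c]
    refine le_ciInf fun t => ?_
    set s : Finset (Fin n) := Finset.univ.filter (fun i => |x i - t| < M * c) with hs
    have hscard : s.card ≤ 1 := by
      refine Finset.card_le_one.mpr fun i hi j hj => ?_
      by_contra hij
      have h1 : |x i - t| < M * c := (Finset.mem_filter.mp hi).2
      have h2 : |x j - t| < M * c := (Finset.mem_filter.mp hj).2
      have h3 : |x i - x j| ≤ |x i - t| + |x j - t| := by
        calc |x i - x j| = |(x i - t) + (t - x j)| := by
              rw [show x i - x j = (x i - t) + (t - x j) from by ring]
          _ ≤ |x i - t| + |t - x j| := abs_add_le _ _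
          _ = |x i - t| + |x j - t| := by rw [abs_sub_comm t (x j)]
      have h4 := hd i j hij
      have h5 : 2 * M * c < d := by
        have := (mul_lt_mul_of_pos_left hcc (by linarith : (0:ℝ) < 2 * M))
        rwa [mul_div_cancel₀ _ (by linarith : (2:ℝ) * M ≠ 0)] at this
      linarith
    have hsub : ∑ i ∈ sᶜ, ρ ((x i - t) / c) ≤ ∑ i, ρ ((x i - t) / c) :=
      Finset.sum_le_sum_of_subset_of_nonneg (Finset.subset_univ _)
        (fun i _ _ => (hrange _).1)
    have hterm : ∀ i ∈ sᶜ, 1 - δ / n ≤ ρ ((x i - t) / c) := by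
      intro i hi
      have hni : ¬ |x i - t| < M * c := by
        intro h
        exact (Finset.mem_compl.mp hi) (Finset.mem_filter.mpr ⟨Finset.mem_univ _, h⟩)
      push_neg at hni
      refine hM _ ?_
      rw [abs_div, abs_of_pos hc, le_div_iff₀ hc]
      exact hni
    have hlb : (sᶜ.card : ℝ) * (1 - δ / n) ≤ ∑ i ∈ sᶜ, ρ ((x i - t) / c) := by
      have := Finset.card_nsmul_le_sum sᶜ (fun i => ρ ((x i - t) / c)) (1 - δ / n) hterm
      rwa [nsmul_eq_mul] at this
    have hccard : n - 1 ≤ sᶜ.card := by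
      have : sᶜ.card = n - s.card := by
        rw [Finset.card_compl, Fintype.card_fin]
      omega
    have hccardR : (n:ℝ) - 1 ≤ (sᶜ.card : ℝ) := by
      have h1 : ((n - 1 : ℕ) : ℝ) ≤ (sᶜ.card : ℝ) := by exact_mod_cast hccard
      have : ((n - 1 : ℕ) : ℝ) = (n:ℝ) - 1 := by
        push_cast [Nat.cast_sub (by omega : 1 ≤ n)]; ring
      linarith
    have hfac : (0:ℝ) ≤ 1 - δ / n := by
      have : δ / n ≤ 1 := by
        rw [div_le_one hnR]
        have : (1:ℝ) ≤ n := by exact_mod_cast hnpos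
        linarith
      linarith
    have h6 : ((n:ℝ) - 1) * (1 - δ / n) ≤ (sᶜ.card : ℝ) * (1 - δ / n) :=
      mul_le_mul_of_nonneg_right hccardR hfac
    have h7 : (n:ℝ) - 1 - δ ≤ ((n:ℝ) - 1) * (1 - δ / n) := by
      have hδn : ((n:ℝ) - 1) * (δ / n) ≤ δ := by
        rw [mul_div_assoc']
        rw [div_le_iff₀ hnR]
        nlinarith
      nlinarith
    linarith
  constructor
  · intro δ hδ
    obtain ⟨c₀, hc₀, hc⟩ := hkey (min δ 1) (lt_min hδ one_pos) (min_le_right _ _)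
    refine ⟨c₀, hc₀, fun c h1 h2 => ?_⟩
    have := hc c h1 h2
    have : min δ 1 ≤ δ := min_le_left _ _
    have := hc c h1 h2
    have hm : (n:ℝ) - 1 - δ ≤ (n:ℝ) - 1 - min δ 1 := by
      have := min_le_left δ 1
      linarith
    linarith
  · -- A tends to n - 1
    have hAt : Tendsto A (nhdsWithin 0 (Set.Ioi 0)) (nhds ((n:ℝ) - 1)) := by
      rw [Metric.tendsto_nhdsWithin_nhds]
      intro ε hε
      set δ' : ℝ := min (ε / 2) 1 with hδ'
      have hδ'pos : 0 < δ' := lt_min (by linarith) one_pos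
      obtain ⟨c₀, hc₀pos, hc₀⟩ := hkey δ' hδ'pos (min_le_right _ _)
      refine ⟨c₀, hc₀pos, fun c hc hdist => ?_⟩
      have hcpos : 0 < c := hc
      have hclt : c < c₀ := by
        rw [Real.dist_eq, sub_zero, abs_of_pos hcpos] at hdist
        exact hdist
      have h1 := hc₀ c hcpos hclt
      have h2 := hub c
      rw [Real.dist_eq]
      have : |A c - ((n:ℝ) - 1)| ≤ δ' := abs_le.mpr ⟨by linarith, by linarith⟩
      have hδ'lt : δ' < ε := lt_of_le_of_lt (min_le_left _ _) (by linarith)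
      linarith
    have hne : (2:ℝ) - ((n:ℝ) - 1) / n ≠ 0 := by
      have : (2:ℝ) - ((n:ℝ) - 1) / n = ((n:ℝ) + 1) / n := by field_simp; ring
      rw [this]
      positivity
    have hnum : Tendsto (fun c => 1 - A c / n) (nhdsWithin 0 (Set.Ioi 0))
        (nhds (1 - ((n:ℝ) - 1) / n)) := tendsto_const_nhds.sub (hAt.div_const n)
    have hden : Tendsto (fun c => 2 - A c / n) (nhdsWithin 0 (Set.Ioi 0))
        (nhds (2 - ((n:ℝ) - 1) / n)) := tendsto_const_nhds.sub (hAt.div_const n)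
    have hdiv := hnum.div hden hne
    have hn' : (n:ℝ) ≠ 0 := hnR.ne'
    have hn1 : (n:ℝ) + 1 ≠ 0 := by positivity
    have heq : (1 - ((n:ℝ) - 1) / n) / (2 - ((n:ℝ) - 1) / n) = 1 / ((n:ℝ) + 1) := by
      rw [div_eq_div_iff hne hn1]
      field_simp
      ring
    rw [← heq]
    exact hdiv
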